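/- Let p ∈ (2, 8/3), r > 0 and A, B, C > 0. Then the function φ(t) = (t²/2) r A + (t/4) r² q B − (t^{3p/2−3}/p) r^{p/2} λ C on (0,∞) has exactly one critical point t⁺ > 0, which is a global minimum, and φ''(t⁺) > 0. -/

import Mathlib

/-! Since `3p − 8 < 0`, `φ''(t) = rA + c·t^{3p/2−5}` with `c > 0`, so `φ` is strictly convex on
`(0,∞)`. Its derivative `φ'` therefore increases strictly, from `−∞` at `0⁺` (the term
`−t^{3p/2−4}` has a negative exponent) to `+∞` at `∞`, and so has exactly one zero; by convexity
that zero is the global minimum. -/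

noncomputable section

/-- The abstract fiber map `φ(t) = (t²/2) r A + (t/4) r² q B − (t^{3p/2−3}/p) r^{p/2} λ C`,
i.e. `φ_{r,u}(t) = E(r^{1/2} u^t)` with `A = ∫|∇u|²`, `B = ∫φ_u u²`, `C = ∫|u|^p`. -/
def fiber (r q lam p A B C : ℝ) (t : ℝ) : ℝ :=
  t ^ 2 / 2 * r * A + t / 4 * r ^ 2 * q * B - t ^ (3 * p / 2 - 3) / p * r ^ (p / 2) * lam * C

/-- The formula for `φ'`. -/
def fiberD (r q lam p A B C : ℝ) (t : ℝ) : ℝ :=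
  t * r * A + r ^ 2 / 4 * q * B
    - 3 * (p - 2) / (2 * p) * t ^ (3 * p / 2 - 4) * r ^ (p / 2) * lam * C

/-- The formula for `φ''`. -/
def fiberDD (r q lam p A B C : ℝ) (t : ℝ) : ℝ :=
  r * A - 3 * (p - 2) * (3 * p - 8) / (4 * p) * t ^ (3 * p / 2 - 5) * r ^ (p / 2) * lam * C

open Filter Set Topology

theorem exists_unique_critical_isMinOn_of_deriv2_pos {S : Set ℝ} (hS : Convex ℝ S) (hSo : IsOpen S)
    {f f' f'' : ℝ → ℝ} (hf : ∀ x ∈ S, HasDerivAt f (f' x) x)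
    (hf' : ∀ x ∈ S, HasDerivAt f' (f'' x) x) (hf''_pos : ∀ x ∈ S, 0 < f'' x)
    {a b : ℝ} (ha : a ∈ S) (hb : b ∈ S) (hfa : f' a ≤ 0) (hfb : 0 ≤ f' b) :
    ∃ c ∈ S, f' c = 0 ∧ (∀ x ∈ S, f' x = 0 → x = c) ∧ IsMinOn f S c := by
  have hint : interior S = S := hSo.interior_eq
  have hf'_cont : ContinuousOn f' S := fun x hx => (hf' x hx).continuousAt.continuousWithinAt
  have hf'_mono : StrictMonoOn f' S := strictMonoOn_of_deriv_pos hS hf'_cont fun x hx => by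
    rw [hint] at hx
    exact (hf' x hx).deriv ▸ hf''_pos x hx
  have hconv : ConvexOn ℝ S f :=
    convexOn_of_hasDerivWithinAt2_nonneg hS
      (fun x hx => (hf x hx).continuousAt.continuousWithinAt)
      (fun x hx => (hf x (hint ▸ hx)).hasDerivWithinAt)
      (fun x hx => (hf' x (hint ▸ hx)).hasDerivWithinAt)
      fun x hx => (hf''_pos x (hint ▸ hx)).le
  obtain ⟨c, hc, hc0⟩ := hS.isPreconnected.intermediate_value ha hb hf'_cont ⟨hfa, hfb⟩
  refine ⟨c, hc, hc0, fun x hx hx0 => hf'_mono.injOn hx hc (hx0.trans hc0.symm), ?_⟩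
  refine hconv.isMinOn_of_rightDeriv_eq_zero (hint.symm ▸ hc) ?_
  rw [(hf c hc).hasDerivWithinAt.derivWithin (uniqueDiffWithinAt_Ioi c), hc0]

lemma fiber_hasDerivAt (r q lam p A B C : ℝ) {t : ℝ} (ht : 0 < t) :
    HasDerivAt (fiber r q lam p A B C) (fiberD r q lam p A B C t) t := by
  have hsq := (((hasDerivAt_pow 2 t).div_const 2).mul_const r).mul_const A
  have hlin := ((((hasDerivAt_id t).div_const 4).mul_const (r ^ 2)).mul_const q).mul_const B
  have hrpow := ((((Real.hasDerivAt_rpow_const (p := 3 * p / 2 - 3) (Or.inl ht.ne')).div_const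
    p).mul_const (r ^ (p / 2))).mul_const lam).mul_const C
  refine ((hsq.add hlin).sub hrpow).congr_deriv ?_
  rw [fiberD, show 3 * p / 2 - 3 - 1 = 3 * p / 2 - 4 by ring]
  ring

lemma fiberD_hasDerivAt (r q lam p A B C : ℝ) {t : ℝ} (ht : 0 < t) :
    HasDerivAt (fiberD r q lam p A B C) (fiberDD r q lam p A B C t) t := by
  have hlin := (((hasDerivAt_id t).mul_const r).mul_const A).add_const (r ^ 2 / 4 * q * B)
  have hrpow := ((((Real.hasDerivAt_rpow_const (p := 3 * p / 2 - 4) (Or.inl ht.ne')).const_mul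
    (3 * (p - 2) / (2 * p))).mul_const (r ^ (p / 2))).mul_const lam).mul_const C
  refine (hlin.sub hrpow).congr_deriv ?_
  rw [fiberDD, show 3 * p / 2 - 4 - 1 = 3 * p / 2 - 5 by ring]
  ring

section

variable {r q lam p A B C : ℝ}

lemma fiberDD_pos (hr : 0 < r) (hlam : 0 < lam) (hp1 : 2 < p) (hp2 : p < 8 / 3) (hA : 0 < A)
    (hC : 0 < C) {t : ℝ} (ht : 0 < t) : 0 < fiberDD r q lam p A B C t := by
  have hκ : 0 < 3 * (p - 2) * (8 - 3 * p) / (4 * p) := by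
    apply div_pos <;> nlinarith
  have hform : fiberDD r q lam p A B C t = r * A +
      3 * (p - 2) * (8 - 3 * p) / (4 * p) * t ^ (3 * p / 2 - 5) * r ^ (p / 2) * lam * C := by
    rw [fiberDD]; ring
  rw [hform]
  positivity

lemma tendsto_fiberD_nhdsGT_zero (hr : 0 < r) (hlam : 0 < lam) (hp1 : 2 < p) (hp2 : p < 8 / 3)
    (hC : 0 < C) : Tendsto (fiberD r q lam p A B C) (𝓝[>] 0) atBot := by
  have hκ : 0 < 3 * (p - 2) / (2 * p) * r ^ (p / 2) * lam * C := by
    have : 0 < 3 * (p - 2) / (2 * p) := by apply div_pos <;> linarith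
    positivity
  have hlin : Tendsto (fun t : ℝ => t * r * A + r ^ 2 / 4 * q * B) (𝓝[>] 0)
      (𝓝 (0 * r * A + r ^ 2 / 4 * q * B)) :=
    tendsto_nhdsWithin_of_tendsto_nhds (Continuous.tendsto (by fun_prop) 0)
  have hsing := (tendsto_rpow_neg_nhdsGT_zero (y := 3 * p / 2 - 4) (by linarith)).const_mul_atTop hκ
  refine (hlin.add_atBot (tendsto_neg_atTop_atBot.comp hsing)).congr fun t => ?_
  simp only [Function.comp, fiberD]
  ring

lemma tendsto_fiberD_atTop (hr : 0 < r) (hp2 : p < 8 / 3) (hA : 0 < A) :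
    Tendsto (fiberD r q lam p A B C) atTop atTop := by
  have hlin : Tendsto (fun t : ℝ => t * (r * A)) atTop atTop :=
    tendsto_id.atTop_mul_const (mul_pos hr hA)
  have hpow : Tendsto (fun t : ℝ => t ^ (3 * p / 2 - 4)) atTop (𝓝 0) := by
    simpa using tendsto_rpow_neg_atTop (y := 4 - 3 * p / 2) (by linarith)
  refine (hlin.atTop_add ((tendsto_const_nhds (x := r ^ 2 / 4 * q * B)).sub
    (hpow.const_mul (3 * (p - 2) / (2 * p) * r ^ (p / 2) * lam * C)))).congr fun t => ?_
  rw [fiberD]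
  ring

end

theorem stmt10_general (r q lam p A B C : ℝ) (hr : 0 < r) (hlam : 0 < lam)
    (hp1 : 2 < p) (hp2 : p < 8 / 3) (hA : 0 < A) (hC : 0 < C) :
    ∃ tp : ℝ, 0 < tp ∧
      deriv (fiber r q lam p A B C) tp = 0 ∧
      (∀ s : ℝ, 0 < s → deriv (fiber r q lam p A B C) s = 0 → s = tp) ∧
      (∀ s : ℝ, 0 < s → fiber r q lam p A B C tp ≤ fiber r q lam p A B C s) ∧
      0 < deriv (deriv (fiber r q lam p A B C)) tp := by
  obtain ⟨a, hfa, ha⟩ := ((tendsto_fiberD_nhdsGT_zero hr hlam hp1 hp2 hC).eventually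
    (eventually_le_atBot 0)).and self_mem_nhdsWithin |>.exists
  obtain ⟨b, hfb, hb⟩ := ((tendsto_fiberD_atTop hr hp2 hA).eventually
    (eventually_ge_atTop 0)).and (eventually_gt_atTop 0) |>.exists
  obtain ⟨c, hc, hc0, hunique, hmin⟩ := exists_unique_critical_isMinOn_of_deriv2_pos (convex_Ioi 0)
    isOpen_Ioi (fun _ ht => fiber_hasDerivAt r q lam p A B C ht)
    (fun _ ht => fiberD_hasDerivAt r q lam p A B C ht)
    (fun _ ht => fiberDD_pos hr hlam hp1 hp2 hA hC ht) ha hb hfa hfb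
  have hderiv : deriv (fiber r q lam p A B C) =ᶠ[𝓝 c] fiberD r q lam p A B C :=
    eventually_of_mem (Ioi_mem_nhds hc) fun t ht => (fiber_hasDerivAt r q lam p A B C ht).deriv
  refine ⟨c, hc, hderiv.eq_of_nhds.trans hc0, fun s hs hs0 => hunique s hs ?_,
    fun s hs => hmin hs, ?_⟩
  · rwa [← (fiber_hasDerivAt r q lam p A B C hs).deriv]
  · rw [hderiv.deriv_eq, (fiberD_hasDerivAt r q lam p A B C hc).deriv]
    exact fiberDD_pos hr hlam hp1 hp2 hA hC hc

/-- For `p ∈ (2, 8/3)` the fiber map has exactly one critical point on `(0,∞)`, which is a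
global minimum, and the second derivative there is positive. -/
theorem stmt10 (r q lam p A B C : ℝ) (hr : 0 < r) (hq : 0 < q) (hlam : 0 < lam)
    (hp1 : 2 < p) (hp2 : p < 8 / 3) (hA : 0 < A) (hB : 0 < B) (hC : 0 < C) :
    ∃ tp : ℝ, 0 < tp ∧
      deriv (fiber r q lam p A B C) tp = 0 ∧
      (∀ s : ℝ, 0 < s → deriv (fiber r q lam p A B C) s = 0 → s = tp) ∧
      (∀ s : ℝ, 0 < s → fiber r q lam p A B C tp ≤ fiber r q lam p A B C s) ∧
      0 < deriv (deriv (fiber r q lam p A B C)) tp :=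
  stmt10_general r q lam p A B C hr hlam hp1 hp2 hA hC

end
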